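/- arXiv:1303.5149 — 6 statements merged into one kernel-verified Lean document; each statement's English description precedes it below -/
import Mathlib

section
/- Let N ≥ 3, μ̄ = (N-2)²/4 and 0 < μ < μ̄. Define γ_M(p,μ) = [(2μ̄-μ)p + μ - μ̄ + 2√(μ̄(μ̄-μ)p(p-1))] / ((p-1)μ + μ̄) for p > 1. Then γ_M(p,μ) < (2μ̄ - μ + 2√(μ̄(μ̄-μ)))/μ for all p > 1. -/
theorem stmt1 (N : ℕ) (hN : 3 ≤ N) (μ : ℝ)
    (μbar : ℝ) (hμbar : μbar = ((N : ℝ) - 2) ^ 2 / 4)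
    (hμ0 : 0 < μ) (hμ : μ < μbar) (p : ℝ) (hp : 1 < p) :
    ((2 * μbar - μ) * p + μ - μbar + 2 * Real.sqrt (μbar * (μbar - μ) * p * (p - 1))) /
        ((p - 1) * μ + μbar)
      < (2 * μbar - μ + 2 * Real.sqrt (μbar * (μbar - μ))) / μ := by
  have hμb : 0 < μbar := lt_trans hμ0 hμ
  have hpp : (0:ℝ) ≤ p * (p - 1) := by nlinarith
  have hmm : (0:ℝ) ≤ μbar * (μbar - μ) := by nlinarith
  have hst : Real.sqrt (μbar * (μbar - μ) * p * (p - 1))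
      = Real.sqrt (μbar * (μbar - μ)) * Real.sqrt (p * (p - 1)) := by
    rw [show μbar * (μbar - μ) * p * (p - 1) = (μbar * (μbar - μ)) * (p * (p - 1)) by ring,
      Real.sqrt_mul hmm]
  set s := Real.sqrt (μbar * (μbar - μ)) with hsdef
  set t := Real.sqrt (p * (p - 1)) with htdef
  have hs2 : s ^ 2 = μbar * (μbar - μ) := Real.sq_sqrt hmm
  have hs0 : 0 < s := Real.sqrt_pos.mpr (by nlinarith)
  have ht0 : 0 ≤ t := Real.sqrt_nonneg _
  have htle : t ≤ p - 1/2 := by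
    have h1 : t ≤ Real.sqrt ((p - 1/2) ^ 2) := Real.sqrt_le_sqrt (by nlinarith)
    rwa [Real.sqrt_sq (by linarith)] at h1
  rw [hst, div_lt_div_iff₀ (by nlinarith) hμ0]
  nlinarith [mul_le_mul_of_nonneg_left htle hμ0.le, hs2, mul_pos hs0 hs0,
    mul_pos hs0 (show (0:ℝ) < μbar - μ/2 by linarith),
    mul_nonneg hs0.le (sub_nonneg.mpr (mul_le_mul_of_nonneg_left htle hμ0.le))]
end

section
/- Let N ≥ 3, μ̄ = (N-2)²/4, 0 < μ < μ̄, p > 1, and let γ_M(p,μ) = [(2μ̄-μ)p + μ - μ̄ + 2√(μ̄(μ̄-μ)p(p-1))] / ((p-1)μ + μ̄). Set α = μ̄/μ - (γ+1)²/(4γ). Then for every γ in [1, γ_M(p,μ)), one has p - (γ+1)²/(4γ) - (γ-1)²(γ+1)²/(16γ²α) > 0. -/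
set_option maxHeartbeats 800000 in
theorem stmt3 (N : ℕ) (hN : 3 ≤ N) (μ μbar : ℝ)
    (hμbar : μbar = ((N : ℝ) - 2) ^ 2 / 4)
    (hμ0 : 0 < μ) (hμ : μ < μbar) (p : ℝ) (hp : 1 < p) :
    ∀ γ : ℝ, 1 ≤ γ →
      γ < ((2 * μbar - μ) * p + μ - μbar + 2 * Real.sqrt (μbar * (μbar - μ) * p * (p - 1))) /
            ((p - 1) * μ + μbar) →
      0 < p - (γ + 1) ^ 2 / (4 * γ) -
            (γ - 1) ^ 2 * (γ + 1) ^ 2 / (16 * γ ^ 2 * (μbar / μ - (γ + 1) ^ 2 / (4 * γ))) := by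
  intro γ hγ1 hγ2
  have hμb0 : 0 < μbar := lt_trans hμ0 hμ
  have hD : 0 < (p - 1) * μ + μbar := by nlinarith
  have hγ0 : (0:ℝ) < γ := lt_of_lt_of_le one_pos hγ1
  have hprod : 0 < μbar * (μbar - μ) * p * (p - 1) :=
    mul_pos (mul_pos (mul_pos hμb0 (by linarith)) (by linarith)) (by linarith)
  set s := Real.sqrt (μbar * (μbar - μ) * p * (p - 1)) with hs
  clear_value s
  have hs0 : 0 ≤ s := by rw [hs]; exact Real.sqrt_nonneg _
  have hs2 : s ^ 2 = μbar * (μbar - μ) * p * (p - 1) := by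
    rw [hs, sq, Real.mul_self_sqrt (le_of_lt hprod)]
  have hc : 0 < (p - 1) * (μbar - μ) := mul_pos (by linarith) (by linarith)
  have hcD : (p - 1) * (μbar - μ) < p * μbar := by nlinarith
  have hsgt : (p - 1) * (μbar - μ) < s := by nlinarith [hs2, hs0, hc, hcD]
  have h1 : γ * ((p - 1) * μ + μbar) < (2 * μbar - μ) * p + μ - μbar + 2 * s :=
    (lt_div_iff₀ hD).mp hγ2
  have ha : 0 < 2 * s - ((γ + 1) * ((p - 1) * μ + μbar) - 2 * p * μbar) := by nlinarith
  have hb : 0 < 2 * s + ((γ + 1) * ((p - 1) * μ + μbar) - 2 * p * μbar) := by nlinarith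
  have hkey : (γ + 1) ^ 2 * ((p - 1) * μ + μbar) < 4 * p * μbar * γ := by
    nlinarith [mul_pos ha hb, hs2, hD, mul_pos hD hD]
  have ht : (γ + 1) ^ 2 / (4 * γ) * ((p - 1) * μ + μbar) < p * μbar := by
    rw [div_mul_eq_mul_div, div_lt_iff₀ (by positivity)]
    nlinarith
  have hαpos : 0 < μbar / μ - (γ + 1) ^ 2 / (4 * γ) := by
    have h2 : (γ + 1) ^ 2 / (4 * γ) < μbar / μ := by
      rw [div_lt_div_iff₀ (by positivity) hμ0]
      nlinarith
    linarith
  have heq : p * (μbar / μ) - ((γ + 1) ^ 2 / (4 * γ)) * (p + μbar / μ - 1) =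
      (p * μbar - ((γ + 1) ^ 2 / (4 * γ)) * ((p - 1) * μ + μbar)) / μ := by
    field_simp
    ring
  have hnum2 : ((γ + 1) ^ 2 / (4 * γ)) * (p + μbar / μ - 1) < p * (μbar / μ) := by
    have hpos : 0 < (p * μbar - ((γ + 1) ^ 2 / (4 * γ)) * ((p - 1) * μ + μbar)) / μ :=
      div_pos (by linarith) hμ0
    linarith [heq ▸ hpos]
  have hA1 : (γ - 1) ^ 2 * (γ + 1) ^ 2 =
      16 * γ ^ 2 * (((γ + 1) ^ 2 / (4 * γ)) * ((γ + 1) ^ 2 / (4 * γ) - 1)) := by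
    field_simp
    ring
  have h16 : (16 : ℝ) * γ ^ 2 ≠ 0 := by positivity
  rw [hA1, mul_div_mul_left _ _ h16]
  have hlast : ((γ + 1) ^ 2 / (4 * γ)) * ((γ + 1) ^ 2 / (4 * γ) - 1) /
      (μbar / μ - (γ + 1) ^ 2 / (4 * γ)) < p - (γ + 1) ^ 2 / (4 * γ) := by
    rw [div_lt_iff₀ hαpos]
    nlinarith [hnum2]
  linarith
end

section
/- Let N > 10 + 4l with l > -2. Then p_c(l,0) := [(N-2)² - 2(l+2)(N+l) + 2(l+2)√((N+l)² - (N-2)²)] / [(N-2)(N-10-4l)] satisfies p_c(l,0) > (N+2+2l)/(N-2), and p = p_c(l,0) solves N = (2p + l + (l+2)(2p + 2√(p(p-1)) - 1))/(p-1). -/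
/-!
Put `x = N - 2` and `m = l + 2`, so that `x > 4m > 0`. The critical equation
`N (p - 1) = 2p + l + m γ_M(p,0)` reads `2m √(p(p-1)) = (x - 2m) p - x`; squaring it gives
`x (x - 4m) p² - 2 (x² - 2mx - 2m²) p + x² = 0`, whose reduced discriminant is
`4m³ (2x + m) = 4m² ((N + l)² - (N - 2)²)`, and `p_c(l,0)` is its larger root. It remains to check
that `(x - 2m) p_c ≥ x`, i.e. that squaring lost nothing; this and `p_c > (x + 2m)/x` are read off
the explicit formula after clearing the denominator `x (x - 4m) > 0`.
-/

open Real

/-- `p_c(l, 0)`. -/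
noncomputable def criticalExponent (N l : ℝ) : ℝ :=
  ((N - 2) ^ 2 - 2 * (l + 2) * (N + l) + 2 * (l + 2) * √((N + l) ^ 2 - (N - 2) ^ 2)) /
    ((N - 2) * (N - 10 - 4 * l))

/-- `γ_M(p, 0)`. -/
noncomputable def gammaM (p : ℝ) : ℝ := 2 * p + 2 * √(p * (p - 1)) - 1

section CriticalExponent

variable {N l : ℝ}

lemma criticalExponent_mul_denom (hl : -2 < l) (hNl : 10 + 4 * l < N) :
    criticalExponent N l * ((N - 2) * (N - 10 - 4 * l)) =
      (N - 2) ^ 2 - 2 * (l + 2) * (N + l) + 2 * (l + 2) * √((N + l) ^ 2 - (N - 2) ^ 2) :=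
  div_mul_cancel₀ _ (mul_pos (by linarith) (by linarith)).ne'

lemma sq_sqrt_criticalRadicand (hl : -2 < l) (hNl : 10 + 4 * l < N) :
    √((N + l) ^ 2 - (N - 2) ^ 2) ^ 2 = (N + l) ^ 2 - (N - 2) ^ 2 :=
  sq_sqrt (by nlinarith)

lemma lt_criticalExponent (hl : -2 < l) (hNl : 10 + 4 * l < N) :
    (N + 2 + 2 * l) / (N - 2) < criticalExponent N l := by
  have hD := criticalExponent_mul_denom hl hNl
  have hs := sqrt_nonneg ((N + l) ^ 2 - (N - 2) ^ 2)
  rw [div_lt_iff₀ (by linarith)]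
  nlinarith [mul_nonneg hs (by linarith : (0 : ℝ) ≤ l + 2)]

lemma one_lt_criticalExponent (hl : -2 < l) (hNl : 10 + 4 * l < N) :
    1 < criticalExponent N l := by
  have : 1 < (N + 2 + 2 * l) / (N - 2) := by rw [one_lt_div (by linarith)]; linarith
  exact this.trans (lt_criticalExponent hl hNl)

lemma criticalExponent_gap_nonneg (hl : -2 < l) (hNl : 10 + 4 * l < N) :
    0 ≤ (N - 2 * l - 6) * criticalExponent N l - (N - 2) := by
  set s := √((N + l) ^ 2 - (N - 2) ^ 2)
  have hgap : ((N - 2 * l - 6) * criticalExponent N l - (N - 2)) * ((N - 2) * (N - 10 - 4 * l)) =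
      2 * (l + 2) ^ 2 * (N + 2 * l + 2) + 2 * (l + 2) * (N - 2 * l - 6) * s := by
    linear_combination (N - 2 * l - 6) * criticalExponent_mul_denom hl hNl
  have hrhs : 0 ≤ 2 * (l + 2) ^ 2 * (N + 2 * l + 2) + 2 * (l + 2) * (N - 2 * l - 6) * s := by
    have : 0 ≤ s := sqrt_nonneg _
    have : 0 ≤ l + 2 := by linarith
    have : 0 ≤ N - 2 * l - 6 := by linarith
    have : 0 ≤ N + 2 * l + 2 := by linarith
    positivity
  rw [← hgap] at hrhs
  exact nonneg_of_mul_nonneg_left hrhs (mul_pos (by linarith) (by linarith))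

lemma criticalExponent_sq_gap (hl : -2 < l) (hNl : 10 + 4 * l < N) :
    ((N - 2 * l - 6) * criticalExponent N l - (N - 2)) ^ 2 =
      (2 * (l + 2)) ^ 2 * (criticalExponent N l * (criticalExponent N l - 1)) := by
  set p := criticalExponent N l
  refine mul_left_cancel₀ (mul_pos (by linarith : 0 < N - 2) (by linarith : 0 < N - 10 - 4 * l)).ne' ?_
  linear_combination (p * ((N - 2) * (N - 10 - 4 * l))
      - ((N - 2) ^ 2 - 2 * (l + 2) * (N - 2) - 2 * (l + 2) ^ 2)
      + 2 * (l + 2) * √((N + l) ^ 2 - (N - 2) ^ 2)) * criticalExponent_mul_denom hl hNl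
    + 4 * (l + 2) ^ 2 * sq_sqrt_criticalRadicand hl hNl

lemma sqrt_criticalExponent_mul_sub_one (hl : -2 < l) (hNl : 10 + 4 * l < N) :
    √(criticalExponent N l * (criticalExponent N l - 1)) =
      ((N - 2 * l - 6) * criticalExponent N l - (N - 2)) / (2 * (l + 2)) := by
  have hm : 0 < 2 * (l + 2) := by linarith
  have hp1 := one_lt_criticalExponent hl hNl
  rw [eq_div_iff hm.ne', ← sqrt_sq hm.le, ← sqrt_mul (mul_nonneg (by linarith) (by linarith)),
    mul_comm, ← criticalExponent_sq_gap hl hNl, sqrt_sq (criticalExponent_gap_nonneg hl hNl)]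

lemma criticalExponent_solves (hl : -2 < l) (hNl : 10 + 4 * l < N) :
    N = (2 * criticalExponent N l + l + (l + 2) * gammaM (criticalExponent N l)) /
      (criticalExponent N l - 1) := by
  have hp1 := one_lt_criticalExponent hl hNl
  have hm : l + 2 ≠ 0 := by linarith
  rw [gammaM, sqrt_criticalExponent_mul_sub_one hl hNl, eq_div_iff (by linarith)]
  field_simp
  ring

end CriticalExponent

theorem stmt7_general (N : ℕ) (l : ℝ) (hl : -2 < l)
    (hNl : 10 + 4 * l < (N : ℝ))
    (pc : ℝ)
    (hpc : pc = (((N : ℝ) - 2) ^ 2 - 2 * (l + 2) * ((N : ℝ) + l) +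
        2 * (l + 2) * Real.sqrt (((N : ℝ) + l) ^ 2 - ((N : ℝ) - 2) ^ 2)) /
        (((N : ℝ) - 2) * ((N : ℝ) - 10 - 4 * l))) :
    ((N : ℝ) + 2 + 2 * l) / ((N : ℝ) - 2) < pc ∧
    (N : ℝ) = (2 * pc + l + (l + 2) * (2 * pc + 2 * Real.sqrt (pc * (pc - 1)) - 1)) / (pc - 1) := by
  rw [← criticalExponent] at hpc
  subst hpc
  exact ⟨lt_criticalExponent hl hNl, criticalExponent_solves hl hNl⟩

theorem stmt7 (N : ℕ) (hN : 3 ≤ N) (l : ℝ) (hl : -2 < l)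
    (hNl : 10 + 4 * l < (N : ℝ))
    (pc : ℝ)
    (hpc : pc = (((N : ℝ) - 2) ^ 2 - 2 * (l + 2) * ((N : ℝ) + l) +
        2 * (l + 2) * Real.sqrt (((N : ℝ) + l) ^ 2 - ((N : ℝ) - 2) ^ 2)) /
        (((N : ℝ) - 2) * ((N : ℝ) - 10 - 4 * l))) :
    ((N : ℝ) + 2 + 2 * l) / ((N : ℝ) - 2) < pc ∧
    (N : ℝ) = (2 * pc + l + (l + 2) * (2 * pc + 2 * Real.sqrt (pc * (pc - 1)) - 1)) / (pc - 1) :=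
  stmt7_general N l hl hNl pc hpc
end

section
/- Let N ≥ 3, l > -2, set m = (l+2)/(p-1) for p > 1, and define h_μ(m) = 4m³ + 4(l+4-N)m² + (N-2)(N-10-4l)m + 4μ(l+2). If 0 < μ < (N-2)²/4, then h_μ(0) > 0 and h_μ(√μ̄) < 0 where μ̄ = (N-2)²/4, so h_μ has a root in (0, √μ̄). -/
theorem stmt8 (N : ℕ) (hN : 3 ≤ N) (l μ : ℝ) (hl : -2 < l)
    (μbar : ℝ) (hμbar : μbar = ((N : ℝ) - 2) ^ 2 / 4)
    (hμ0 : 0 < μ) (hμ : μ < μbar)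
    (h : ℝ → ℝ)
    (hh : ∀ m : ℝ, h m = 4 * m ^ 3 + 4 * (l + 4 - (N : ℝ)) * m ^ 2 +
        ((N : ℝ) - 2) * ((N : ℝ) - 10 - 4 * l) * m + 4 * μ * (l + 2)) :
    0 < h 0 ∧ h (Real.sqrt μbar) < 0 ∧
    ∃ m ∈ Set.Ioo 0 (Real.sqrt μbar), h m = 0 := by
  have hN' : (3 : ℝ) ≤ (N : ℝ) := by exact_mod_cast hN
  have hs : Real.sqrt μbar = ((N : ℝ) - 2) / 2 := by
    rw [hμbar]
    have : ((N : ℝ) - 2) ^ 2 / 4 = (((N : ℝ) - 2) / 2) ^ 2 := by ring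
    rw [this, Real.sqrt_sq (by linarith)]
  have hl2 : 0 < l + 2 := by linarith
  have h0 : 0 < h 0 := by
    rw [hh]; nlinarith
  have hsneg : h (Real.sqrt μbar) < 0 := by
    rw [hh, hs]
    have : 4 * (((N:ℝ)-2)/2) ^ 3 + 4 * (l + 4 - (N : ℝ)) * (((N:ℝ)-2)/2) ^ 2 +
        ((N : ℝ) - 2) * ((N : ℝ) - 10 - 4 * l) * (((N:ℝ)-2)/2) + 4 * μ * (l + 2)
        = 4 * (l + 2) * (μ - ((N:ℝ)-2)^2/4) := by ring
    rw [this]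
    have : μ - ((N:ℝ)-2)^2/4 < 0 := by rw [hμbar] at hμ; linarith
    nlinarith
  refine ⟨h0, hsneg, ?_⟩
  have hcont : ContinuousOn h (Set.Icc 0 (Real.sqrt μbar)) := by
    have : h = fun m => 4 * m ^ 3 + 4 * (l + 4 - (N : ℝ)) * m ^ 2 +
        ((N : ℝ) - 2) * ((N : ℝ) - 10 - 4 * l) * m + 4 * μ * (l + 2) := funext hh
    rw [this]; fun_prop
  have hle : (0:ℝ) ≤ Real.sqrt μbar := Real.sqrt_nonneg _
  have := intermediate_value_Ioo' hle hcont
  have h0mem : (0:ℝ) ∈ Set.Ioo (h (Real.sqrt μbar)) (h 0) := ⟨hsneg, h0⟩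
  obtain ⟨m, hm, hm0⟩ := this h0mem
  exact ⟨m, hm, hm0⟩
end

section
/- Let N > 10 + 4l with l > -2 and define μ* = -(2N+l-2)(N-10-4l)²/(108(l+2)). Then the cubic h_{μ*}(m) = 4m³ + 4(l+4-N)m² + (N-2)(N-10-4l)m + 4μ*(l+2) satisfies h_{μ*}((N-10-4l)/6) = 0 and h_{μ*}(m) ≤ 0 for all m ∈ (0, (N-2)/2). -/
theorem stmt9 (N : ℕ) (hN : 3 ≤ N) (l : ℝ) (hl : -2 < l)
    (hNl : 10 + 4 * l < (N : ℝ))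
    (μs : ℝ)
    (hμs : μs = -(2 * (N : ℝ) + l - 2) * ((N : ℝ) - 10 - 4 * l) ^ 2 / (108 * (l + 2)))
    (h : ℝ → ℝ)
    (hh : ∀ m : ℝ, h m = 4 * m ^ 3 + 4 * (l + 4 - (N : ℝ)) * m ^ 2 +
        ((N : ℝ) - 2) * ((N : ℝ) - 10 - 4 * l) * m + 4 * μs * (l + 2)) :
    h (((N : ℝ) - 10 - 4 * l) / 6) = 0 ∧
    ∀ m ∈ Set.Ioo (0 : ℝ) (((N : ℝ) - 2) / 2), h m ≤ 0 := by
  have hl2 : l + 2 ≠ 0 := by nlinarith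
  have hN3 : (3 : ℝ) ≤ (N : ℝ) := by exact_mod_cast hN
  have key : ∀ m : ℝ, h m =
      4 * (m - ((N : ℝ) - 10 - 4 * l) / 6) ^ 2 * (m - (2 * (N : ℝ) + l - 2) / 3) := by
    intro m
    rw [hh, hμs]
    field_simp
    ring
  constructor
  · rw [key]; ring
  · intro m hm
    rw [key]
    have h1 : m - (2 * (N : ℝ) + l - 2) / 3 ≤ 0 := by
      have := hm.2; nlinarith
    nlinarith [sq_nonneg (m - ((N : ℝ) - 10 - 4 * l) / 6)]
end

section
/- Let N ≥ 3, l > -2, and suppose p ≥ (N+2+2l)/(N-2) and p < p_c(l,μ), where p_c(l,μ) is the unique p > 1 with N(p-1) = 2p + l + (l+2)γ_M(p,μ). Define H(p,γ) = N(p-1) - (γ+1)l - 2(p+γ). Then H(p,1) ≥ 0 and H(p,γ_M(p,μ)) < 0, so by continuity there exists γ* ∈ [1, γ_M(p,μ)) with H(p,γ*) = 0; moreover for this γ*, (l+N)/(p+γ*) = (l+2)/(p-1). -/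
private lemma key17 (a b m x y q qy e : ℝ) (ha : 0 ≤ a) (hm : 0 < m) (hx : 0 < x)
    (hxy : x < y) (hq : q = a*x^2 + b*x - 2*m) (hqy : qy = a*y^2 + b*y - 2*m)
    (he : e = a*(x+y) + b) (hqpos : 0 < q) :
    q^2 * (y^2 + y) < qy^2 * (x^2 + x) := by
  subst hq hqy he
  have hy : 0 < y := hx.trans hxy
  have habx : 0 < a*x + b := by nlinarith [mul_pos hx hx]
  have he0 : 0 < a*(x+y) + b := by nlinarith [mul_nonneg ha hy.le]
  have hqe : a*x^2 + b*x - 2*m < x*(a*(x+y) + b) := by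
    nlinarith [mul_nonneg ha (mul_nonneg hx.le hy.le)]
  rcases le_or_gt y (x+1) with hc | hc
  · nlinarith [mul_nonneg (mul_nonneg (mul_nonneg (sub_nonneg.2 hxy.le)
        (by linarith : (0:ℝ) ≤ x+y+1)) hqpos.le) (sub_pos.2 hqe).le,
      mul_nonneg (mul_nonneg (mul_nonneg (mul_nonneg (sub_nonneg.2 hxy.le) hqpos.le)
        he0.le) hx.le) (by linarith : (0:ℝ) ≤ x+1-y),
      mul_pos (mul_pos (mul_pos (sub_pos.2 hxy) (mul_pos he0 he0)) hx)
        (by linarith : (0:ℝ) < x+1)]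
  · nlinarith [mul_nonneg (mul_nonneg (mul_nonneg (sub_nonneg.2 hxy.le)
        (by linarith : (0:ℝ) ≤ x+y+1)) hqpos.le) (sub_pos.2 hqe).le,
      mul_nonneg (mul_nonneg (mul_nonneg (mul_nonneg (sub_nonneg.2 hxy.le)
        he0.le) hx.le) (by linarith : (0:ℝ) ≤ y-x-1)) (sub_pos.2 hqe).le,
      mul_pos (mul_pos (mul_pos (mul_pos (sub_pos.2 hxy) he0) he0) hx) hy]

theorem stmt17 (N : ℕ) (hN : 3 ≤ N) (l μ : ℝ) (hl : -2 < l)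
    (μbar : ℝ) (hμbar : μbar = ((N : ℝ) - 2) ^ 2 / 4) (hμ : μ < μbar)
    (μp : ℝ) (hμp : μp = max μ 0)
    (γM : ℝ → ℝ)
    (hγM : ∀ p : ℝ, γM p =
      ((2 * μbar - μp) * p + μp - μbar + 2 * Real.sqrt (μbar * (μbar - μp) * p * (p - 1))) /
        ((p - 1) * μp + μbar))
    (H : ℝ → ℝ → ℝ)
    (hH : ∀ p γ : ℝ, H p γ = (N : ℝ) * (p - 1) - (γ + 1) * l - 2 * (p + γ))
    (pc : ℝ) (hpc1 : 1 < pc)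
    (hpceq : (N : ℝ) * (pc - 1) = 2 * pc + l + (l + 2) * γM pc)
    (p : ℝ) (hp1 : 1 < p)
    (hp2 : ((N : ℝ) + 2 + 2 * l) / ((N : ℝ) - 2) ≤ p) (hp3 : p < pc) :
    H p 1 ≥ 0 ∧ H p (γM p) < 0 ∧
    ∃ γs : ℝ, 1 ≤ γs ∧ γs < γM p ∧ H p γs = 0 ∧
      (l + (N : ℝ)) / (p + γs) = (l + 2) / (p - 1) := by
  have hN3 : (3:ℝ) ≤ (N:ℝ) := by exact_mod_cast hN
  have hN2 : (0:ℝ) < (N:ℝ) - 2 := by linarith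
  have hl2 : (0:ℝ) < l + 2 := by linarith
  have hm0 : 0 < μbar := by rw [hμbar]; positivity
  have ht0 : 0 ≤ μp := by rw [hμp]; exact le_max_right _ _
  have htm : μp < μbar := by rw [hμp]; exact max_lt hμ hm0
  have hp2' : (N:ℝ) + 2 + 2*l ≤ ((N:ℝ) - 2) * p := by
    have := (div_le_iff₀ hN2).mp hp2; linarith
  obtain ⟨k, hk⟩ : ∃ k:ℝ, k = ((N:ℝ) - 2) / (l + 2) := ⟨_, rfl⟩
  have hkl : k * (l + 2) = (N:ℝ) - 2 := by
    rw [hk]; exact div_mul_cancel₀ _ (ne_of_gt hl2)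
  have hk0 : 0 < k := by rw [hk]; exact div_pos hN2 hl2
  obtain ⟨g, hg⟩ : ∃ g:ℝ, g = k * (p - 1) - 1 := ⟨_, rfl⟩
  have hg2 : (l + 2) * g = (N:ℝ) * (p - 1) - 2*p - l := by
    linear_combination (l+2) * hg + (p-1) * hkl
  have hkp2 : (2:ℝ) ≤ k * (p - 1) := by
    have he1 : (k * (p-1)) * (l + 2) = ((N:ℝ) - 2) * p - ((N:ℝ) - 2) := by
      linear_combination (p-1) * hkl
    have he2 : (2:ℝ) * (l+2) ≤ (k * (p-1)) * (l+2) := by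
      rw [he1]; linarith
    exact le_of_mul_le_mul_right he2 hl2
  have hg1 : 1 ≤ g := by rw [hg]; linarith
  have hAx : 0 < (p - 1) * μp + μbar :=
    add_pos_of_nonneg_of_pos (mul_nonneg (by linarith) ht0) hm0
  have hAy : 0 < (pc - 1) * μp + μbar :=
    add_pos_of_nonneg_of_pos (mul_nonneg (by linarith) ht0) hm0
  have hDx : 0 < μbar * (μbar - μp) * p * (p - 1) := by
    apply mul_pos (mul_pos (mul_pos hm0 (by linarith)) (by linarith)); linarith
  have hDy : 0 < μbar * (μbar - μp) * pc * (pc - 1) := by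
    apply mul_pos (mul_pos (mul_pos hm0 (by linarith)) (by linarith)); linarith
  obtain ⟨Sx, hSx⟩ : ∃ s:ℝ, s = Real.sqrt (μbar * (μbar - μp) * p * (p - 1)) := ⟨_, rfl⟩
  obtain ⟨Sy, hSy⟩ : ∃ s:ℝ, s = Real.sqrt (μbar * (μbar - μp) * pc * (pc - 1)) := ⟨_, rfl⟩
  have hSx0 : 0 < Sx := hSx ▸ Real.sqrt_pos.mpr hDx
  have hSy0 : 0 < Sy := hSy ▸ Real.sqrt_pos.mpr hDy
  have hSx2 : Sx ^ 2 = μbar * (μbar - μp) * p * (p - 1) := by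
    rw [hSx]; exact Real.sq_sqrt hDx.le
  have hSy2 : Sy ^ 2 = μbar * (μbar - μp) * pc * (pc - 1) := by
    rw [hSy]; exact Real.sq_sqrt hDy.le
  obtain ⟨qx, hqx⟩ : ∃ q:ℝ,
    q = μp * k * (p-1)^2 + (μbar*k - 2*μbar) * (p-1) - 2*μbar := ⟨_, rfl⟩
  obtain ⟨qy, hqy⟩ : ∃ q:ℝ,
    q = μp * k * (pc-1)^2 + (μbar*k - 2*μbar) * (pc-1) - 2*μbar := ⟨_, rfl⟩
  -- γM pc = k*(pc-1) - 1
  have hγMpc : γM pc = k * (pc - 1) - 1 := by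
    have h1 : (l+2) * γM pc = (N:ℝ) * (pc - 1) - 2*pc - l := by linarith
    have h2 : (l+2) * (k * (pc-1) - 1) = (N:ℝ) * (pc - 1) - 2*pc - l := by
      linear_combination (pc-1) * hkl
    exact mul_left_cancel₀ (by linarith : (l:ℝ)+2 ≠ 0) (h1.trans h2.symm)
  have hqySy : qy = 2 * Sy := by
    have h2 : k * (pc - 1) - 1 =
        ((2 * μbar - μp) * pc + μp - μbar + 2 * Sy) / ((pc - 1) * μp + μbar) := by
      rw [← hγMpc, hγM pc, hSy]
    have h3 := (eq_div_iff (ne_of_gt hAy)).mp h2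
    linear_combination h3 + hqy
  have hqy0 : 0 < qy := by rw [hqySy]; linarith
  have hqy2 : qy ^ 2 = 4 * (μbar * (μbar - μp) * pc * (pc - 1)) := by
    rw [hqySy, mul_pow, hSy2]; ring
  -- main claim : qx < 2 * Sx
  have hmain : qx < 2 * Sx := by
    rcases le_or_gt qx 0 with hc | hc
    · linarith
    · have hkey := key17 (μp * k) (μbar*k - 2*μbar) μbar (p-1) (pc-1) qx qy
        (μp*k*((p-1)+(pc-1)) + (μbar*k - 2*μbar))
        (mul_nonneg ht0 hk0.le) hm0 (by linarith) (by linarith) hqx hqy rfl hc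
      have hyy : 0 < pc * (pc - 1) := mul_pos (by linarith) (by linarith)
      have h4 : qx ^ 2 * (pc * (pc-1))
          < (4 * (μbar * (μbar - μp) * p * (p - 1))) * (pc * (pc-1)) := by
        calc qx ^ 2 * (pc * (pc-1)) = qx^2 * ((pc-1)^2 + (pc-1)) := by ring
          _ < qy^2 * ((p-1)^2 + (p-1)) := hkey
          _ = (4 * (μbar * (μbar - μp) * p * (p - 1))) * (pc * (pc-1)) := by
              rw [hqy2]; ring
      have h5 : qx ^ 2 < 4 * (μbar * (μbar - μp) * p * (p - 1)) :=
        lt_of_mul_lt_mul_right h4 hyy.le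
      have h6 : qx < Real.sqrt (4 * (μbar * (μbar - μp) * p * (p - 1))) :=
        (Real.lt_sqrt hc.le).mpr h5
      have h7 : Real.sqrt (4 * (μbar * (μbar - μp) * p * (p - 1))) = 2 * Sx := by
        rw [show (4:ℝ) * (μbar * (μbar - μp) * p * (p - 1))
            = 2^2 * (μbar * (μbar - μp) * p * (p - 1)) by ring,
          Real.sqrt_mul (by positivity), Real.sqrt_sq (by norm_num), hSx]
      rwa [h7] at h6
  -- hence g < γM p
  have hgγ : g < γM p := by
    rw [hγM p, ← hSx, lt_div_iff₀ hAx]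
    have hid : g * ((p - 1) * μp + μbar)
        = qx + ((2 * μbar - μp) * p + μp - μbar) := by
      linear_combination ((p-1)*μp + μbar) * hg - hqx
    linarith [hid, hmain]
  refine ⟨?_, ?_, g, hg1, hgγ, ?_, ?_⟩
  · rw [hH]; linarith only [hp2']
  · rw [hH]
    have h9 := mul_lt_mul_of_pos_left hgγ hl2
    linarith only [hg2, h9]
  · rw [hH]; linear_combination -hg2
  · have hpg : 0 < p + g := by linarith
    rw [div_eq_div_iff hpg.ne' (by linarith : (0:ℝ) < p - 1).ne']
    linear_combination -hg2
end
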